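/- Let Ĥ be a self-adjoint operator on H, let φ₁,…,φ_m be linearly independent vectors of H with determinant state |φ_A⟩, and let 𝐇 = Σ_{k=1}^m 1⊗⋯⊗Ĥ⊗⋯⊗1 (with Ĥ in the k-th tensor factor) act on H^{⊗m}. Then the energy of the determinant state equals the trace of the Rayleigh matrix: ⟨φ_A, 𝐇 φ_A⟩ / ⟨φ_A, φ_A⟩ = tr(G⁻¹ G^{(H)}), where G is the invertible m×m Gram matrix G_{ij} = ⟨φ_i, φ_j⟩ and G^{(H)}_{ij} = ⟨φ_i, Ĥ φ_j⟩. -/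
import Mathlib


open scoped TensorProduct InnerProductSpace

/-- The permutation operator `P_σ` on the `m`-fold tensor power, acting on elementary
tensors by `P_σ (x₁ ⊗ ⋯ ⊗ x_m) = x_{σ⁻¹(1)} ⊗ ⋯ ⊗ x_{σ⁻¹(m)}`. -/
noncomputable def permOp {H : Type*} [AddCommGroup H] [Module ℂ H] {m : ℕ}
    (σ : Equiv.Perm (Fin m)) :
    (⨂[ℂ] _ : Fin m, H) →ₗ[ℂ] ⨂[ℂ] _ : Fin m, H :=
  (PiTensorProduct.reindex ℂ (fun _ : Fin m => H) σ).toLinearMap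

/-- The antisymmetrizer `S₋ = (1/m!) Σ_σ sgn(σ) P_σ`. -/
noncomputable def antisymmetrizer (H : Type*) [AddCommGroup H] [Module ℂ H] (m : ℕ) :
    (⨂[ℂ] _ : Fin m, H) →ₗ[ℂ] ⨂[ℂ] _ : Fin m, H :=
  (m.factorial : ℂ)⁻¹ • ∑ σ : Equiv.Perm (Fin m), (((Equiv.Perm.sign σ : ℤ) : ℂ)) • permOp σ

/-- The determinant state `|φ_A⟩ = S₋ (φ₁ ⊗ ⋯ ⊗ φ_m)` of a family `φ₁, …, φ_m`. -/
noncomputable def detState {H : Type*} [AddCommGroup H] [Module ℂ H] {m : ℕ}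
    (φ : Fin m → H) : ⨂[ℂ] _ : Fin m, H :=
  antisymmetrizer H m (PiTensorProduct.tprod ℂ φ)

/-- The generalization `𝐇 = Σ_{k=1}^m 1 ⊗ ⋯ ⊗ Ĥ ⊗ ⋯ ⊗ 1` (with `Ĥ` in the `k`-th tensor
factor) of an operator `Ĥ` on `H` to an operator on `H^{⊗m}`. -/
noncomputable def bigOp {H : Type*} [AddCommGroup H] [Module ℂ H] {m : ℕ}
    (T : H →ₗ[ℂ] H) :
    (⨂[ℂ] _ : Fin m, H) →ₗ[ℂ] ⨂[ℂ] _ : Fin m, H :=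
  ∑ k : Fin m, PiTensorProduct.map (fun i : Fin m => if i = k then T else LinearMap.id)

lemma updateRow_updateRow' {m : ℕ} (M : Matrix (Fin m) (Fin m) ℂ) (i : Fin m)
    (v w : Fin m → ℂ) : (M.updateRow i v).updateRow i w = M.updateRow i w := by
  ext a b
  by_cases h : a = i <;> simp [Matrix.updateRow_apply, h]

lemma trace_formula {m : ℕ} (G GH : Matrix (Fin m) (Fin m) ℂ) (hG : G.det ≠ 0) :
    Matrix.trace (G⁻¹ * GH) = (∑ l, (G.updateCol l fun i => GH i l).det) / G.det := by
  have hadj : ∀ l i : Fin m, (G.updateCol l fun i => GH i l).adjugate l i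
      = G.adjugate l i := by
    intro l i
    have h1 : ∀ (A : Matrix (Fin m) (Fin m) ℂ),
        A.adjugate l i = (A.transpose.updateRow l (Pi.single i 1)).det := by
      intro A
      rw [show A.adjugate l i = A.adjugate.transpose i l from rfl,
        Matrix.adjugate_transpose, Matrix.adjugate_apply]
    rw [h1, h1]
    congr 1
    rw [← Matrix.updateRow_transpose]
    exact updateRow_updateRow' _ _ _ _
  have hdet : ∀ l, (G.updateCol l fun i => GH i l).det
      = ∑ i, GH i l * G.adjugate l i := by
    intro l
    rw [Matrix.det_eq_sum_mul_adjugate_col _ l]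
    refine Finset.sum_congr rfl fun i _ => ?_
    rw [hadj l i, Matrix.updateCol_self]
  have htr : Matrix.trace (G⁻¹ * GH) = ∑ l, ∑ j, G.det⁻¹ * G.adjugate l j * GH j l := by
    simp [Matrix.trace, Matrix.diag, Matrix.mul_apply, Matrix.inv_def, Ring.inverse_eq_inv,
      Matrix.smul_apply, smul_eq_mul, mul_assoc]
  rw [htr, eq_div_iff hG]
  rw [Finset.sum_mul]
  simp only [hdet]
  refine Finset.sum_congr rfl fun l _ => ?_
  rw [Finset.sum_mul]
  refine Finset.sum_congr rfl fun j _ => ?_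
  field_simp

lemma det_gram_ne_zero {H : Type*} [NormedAddCommGroup H] [InnerProductSpace ℂ H] {m : ℕ}
    (φ : Fin m → H) (hφli : LinearIndependent ℂ φ) :
    (Matrix.of fun i j => ⟪φ i, φ j⟫_ℂ).det ≠ 0 := by
  set G : Matrix (Fin m) (Fin m) ℂ := Matrix.of fun i j => ⟪φ i, φ j⟫_ℂ with hGdef
  have hker : ∀ v : Fin m → ℂ, G.mulVec v = 0 → v = 0 := by
    intro v hv
    have hiv : ∀ i, ⟪φ i, ∑ j, v j • φ j⟫_ℂ = 0 := by
      intro i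
      have := congrFun hv i
      simpa [Matrix.mulVec, dotProduct, inner_sum, inner_smul_right, hGdef,
        mul_comm] using this
    have hw0 : (∑ j, v j • φ j) = 0 := by
      have h0 : ⟪∑ j, v j • φ j, ∑ j, v j • φ j⟫_ℂ = 0 := by
        rw [sum_inner]
        simp [inner_smul_left, hiv]
      exact inner_self_eq_zero.mp h0
    exact funext (Fintype.linearIndependent_iff.mp hφli v hw0)
  have hinj : Function.Injective G.mulVec := by
    intro a b hab
    have h := hker (a - b) (by rw [Matrix.mulVec_sub, hab, sub_self])
    exact sub_eq_zero.mp h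
  have hu : IsUnit G := Matrix.mulVec_injective_iff_isUnit.mp hinj
  exact ((Matrix.isUnit_iff_isUnit_det G).mp hu).ne_zero

lemma detState_eq {H : Type*} [AddCommGroup H] [Module ℂ H] {m : ℕ} (φ : Fin m → H) :
    detState φ = (m.factorial : ℂ)⁻¹ •
      ∑ σ : Equiv.Perm (Fin m), ((Equiv.Perm.sign σ : ℤ) : ℂ) •
        PiTensorProduct.tprod ℂ (fun i => φ (σ.symm i)) := by
  simp [detState, antisymmetrizer, permOp, LinearMap.sum_apply]

lemma inn_detState_tprod {H : Type*} [NormedAddCommGroup H] [InnerProductSpace ℂ H] {m : ℕ}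
    (inn : (⨂[ℂ] _ : Fin m, H) →ₗ⋆[ℂ] (⨂[ℂ] _ : Fin m, H) →ₗ[ℂ] ℂ)
    (h_inn : ∀ x y : Fin m → H,
      inn (PiTensorProduct.tprod ℂ x) (PiTensorProduct.tprod ℂ y) = ∏ i, ⟪x i, y i⟫_ℂ)
    (φ ψ : Fin m → H) :
    inn (detState φ) (PiTensorProduct.tprod ℂ ψ)
      = (m.factorial : ℂ)⁻¹ * ∑ σ : Equiv.Perm (Fin m),
          ((Equiv.Perm.sign σ : ℤ) : ℂ) * ∏ j, ⟪φ j, ψ (σ j)⟫_ℂ := by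
  rw [detState_eq, map_smulₛₗ, map_sum]
  simp only [map_smulₛₗ, LinearMap.smul_apply, LinearMap.sum_apply, h_inn]
  have h2 : ∀ σ : Equiv.Perm (Fin m),
      ∏ i, ⟪φ (σ.symm i), ψ i⟫_ℂ = ∏ j, ⟪φ j, ψ (σ j)⟫_ℂ := by
    intro σ
    rw [← Equiv.prod_comp σ.symm fun j => ⟪φ j, ψ (σ j)⟫_ℂ]
    simp
  simp only [h2, map_inv₀, map_natCast, map_intCast, smul_eq_mul]

lemma perm_sum_det {m : ℕ} (M : Matrix (Fin m) (Fin m) ℂ) :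
    ∑ π : Equiv.Perm (Fin m), ((Equiv.Perm.sign π : ℤ) : ℂ) * ∏ j, M j (π j) = M.det := by
  rw [← Matrix.det_transpose, Matrix.det_apply]
  refine Finset.sum_congr rfl fun π _ => ?_
  simp [Units.smul_def, zsmul_eq_mul, Matrix.transpose_apply]

lemma sign_sq {m : ℕ} (τ : Equiv.Perm (Fin m)) :
    ((Equiv.Perm.sign τ : ℤ) : ℂ) * ((Equiv.Perm.sign τ : ℤ) : ℂ) = 1 := by
  rw [← Int.cast_mul, ← Units.val_mul, Int.units_mul_self, Units.val_one, Int.cast_one]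

lemma sign_mul_cast {m : ℕ} (τ π : Equiv.Perm (Fin m)) :
    ((Equiv.Perm.sign (τ * π) : ℤ) : ℂ)
      = ((Equiv.Perm.sign τ : ℤ) : ℂ) * ((Equiv.Perm.sign π : ℤ) : ℂ) := by
  rw [← Int.cast_mul, ← Units.val_mul, map_mul]

lemma sign_cancel {m : ℕ} (τ σ : Equiv.Perm (Fin m)) :
    ((Equiv.Perm.sign τ : ℤ) : ℂ) * ((Equiv.Perm.sign (τ⁻¹ * σ) : ℤ) : ℂ)
      = ((Equiv.Perm.sign σ : ℤ) : ℂ) := by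
  rw [sign_mul_cast, map_inv, ← mul_assoc]
  simp [sign_sq]

lemma inn_detState_detState {H : Type*} [NormedAddCommGroup H] [InnerProductSpace ℂ H] {m : ℕ}
    (inn : (⨂[ℂ] _ : Fin m, H) →ₗ⋆[ℂ] (⨂[ℂ] _ : Fin m, H) →ₗ[ℂ] ℂ)
    (h_inn : ∀ x y : Fin m → H,
      inn (PiTensorProduct.tprod ℂ x) (PiTensorProduct.tprod ℂ y) = ∏ i, ⟪x i, y i⟫_ℂ)
    (φ : Fin m → H) :
    inn (detState φ) (detState φ)
      = (m.factorial : ℂ)⁻¹ * (Matrix.of fun i j => ⟪φ i, φ j⟫_ℂ).det := by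
  nth_rewrite 2 [detState_eq]
  rw [map_smul, map_sum]
  simp only [map_smul, smul_eq_mul, inn_detState_tprod inn h_inn φ]
  have key : ∀ τ : Equiv.Perm (Fin m),
      ∑ σ : Equiv.Perm (Fin m), ((Equiv.Perm.sign σ : ℤ) : ℂ)
          * ∏ j, ⟪φ j, φ (τ.symm (σ j))⟫_ℂ
        = ((Equiv.Perm.sign τ : ℤ) : ℂ) * (Matrix.of fun i j => ⟪φ i, φ j⟫_ℂ).det := by
    intro τ
    rw [← perm_sum_det (Matrix.of fun i j => ⟪φ i, φ j⟫_ℂ), Finset.mul_sum]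
    refine Fintype.sum_equiv (Equiv.mulLeft τ⁻¹) _ _ fun σ => ?_
    rw [Equiv.coe_mulLeft, ← mul_assoc, sign_cancel]
    congr 1
  simp only [key]
  have hterm : ∀ τ : Equiv.Perm (Fin m),
      ((Equiv.Perm.sign τ : ℤ) : ℂ)
          * ((m.factorial : ℂ)⁻¹ * (((Equiv.Perm.sign τ : ℤ) : ℂ)
              * (Matrix.of fun i j => ⟪φ i, φ j⟫_ℂ).det))
        = (m.factorial : ℂ)⁻¹ * (Matrix.of fun i j => ⟪φ i, φ j⟫_ℂ).det := by
    intro τ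
    linear_combination (m.factorial : ℂ)⁻¹ * (Matrix.of fun i j => ⟪φ i, φ j⟫_ℂ).det
      * sign_sq τ
  rw [Finset.sum_congr rfl fun τ _ => hterm τ, Finset.sum_const, Finset.card_univ,
    Fintype.card_perm, Fintype.card_fin, nsmul_eq_mul]
  have hm : (m.factorial : ℂ) ≠ 0 := Nat.cast_ne_zero.mpr (Nat.factorial_ne_zero m)
  field_simp

lemma final_sum {m : ℕ} (S : ℂ) :
    (m.factorial : ℂ)⁻¹ * ∑ τ : Equiv.Perm (Fin m),
        ((Equiv.Perm.sign τ : ℤ) : ℂ) * ((m.factorial : ℂ)⁻¹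
          * (((Equiv.Perm.sign τ : ℤ) : ℂ) * S))
      = (m.factorial : ℂ)⁻¹ * S := by
  have hterm : ∀ τ : Equiv.Perm (Fin m),
      ((Equiv.Perm.sign τ : ℤ) : ℂ) * ((m.factorial : ℂ)⁻¹
          * (((Equiv.Perm.sign τ : ℤ) : ℂ) * S))
        = (m.factorial : ℂ)⁻¹ * S := by
    intro τ
    linear_combination (m.factorial : ℂ)⁻¹ * S * sign_sq τ
  rw [Finset.sum_congr rfl fun τ _ => hterm τ, Finset.sum_const, Finset.card_univ,
    Fintype.card_perm, Fintype.card_fin, nsmul_eq_mul]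
  have hm : (m.factorial : ℂ) ≠ 0 := Nat.cast_ne_zero.mpr (Nat.factorial_ne_zero m)
  field_simp

lemma inn_detState_bigOp {H : Type*} [NormedAddCommGroup H] [InnerProductSpace ℂ H] {m : ℕ}
    (inn : (⨂[ℂ] _ : Fin m, H) →ₗ⋆[ℂ] (⨂[ℂ] _ : Fin m, H) →ₗ[ℂ] ℂ)
    (h_inn : ∀ x y : Fin m → H,
      inn (PiTensorProduct.tprod ℂ x) (PiTensorProduct.tprod ℂ y) = ∏ i, ⟪x i, y i⟫_ℂ)
    (T : H →ₗ[ℂ] H) (φ : Fin m → H) :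
    inn (detState φ) (bigOp T (detState φ))
      = (m.factorial : ℂ)⁻¹ * ∑ l, ((Matrix.of fun i j => ⟪φ i, φ j⟫_ℂ).updateCol l
          fun i => ⟪φ i, T (φ l)⟫_ℂ).det := by
  have hbig : bigOp T (detState φ) = (m.factorial : ℂ)⁻¹ •
      ∑ τ : Equiv.Perm (Fin m), ((Equiv.Perm.sign τ : ℤ) : ℂ) •
        ∑ k, PiTensorProduct.tprod ℂ
          (fun i => if i = k then T (φ (τ.symm i)) else φ (τ.symm i)) := by
    rw [detState_eq, map_smul, map_sum]
    congr 1
    refine Finset.sum_congr rfl fun τ _ => ?_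
    rw [map_smul]
    congr 1
    rw [bigOp, LinearMap.sum_apply]
    refine Finset.sum_congr rfl fun k _ => ?_
    rw [PiTensorProduct.map_tprod]
    congr 1
    funext i
    by_cases h : i = k <;> simp [h]
  have key1 : ∀ (τ : Equiv.Perm (Fin m)) (k : Fin m),
      ∑ σ : Equiv.Perm (Fin m), ((Equiv.Perm.sign σ : ℤ) : ℂ)
          * ∏ j, ⟪φ j, if σ j = k then T (φ (τ.symm (σ j))) else φ (τ.symm (σ j))⟫_ℂ
        = ((Equiv.Perm.sign τ : ℤ) : ℂ)
            * ((Matrix.of fun i j => ⟪φ i, φ j⟫_ℂ).updateCol (τ.symm k)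
                fun i => ⟪φ i, T (φ (τ.symm k))⟫_ℂ).det := by
    intro τ k
    rw [← perm_sum_det ((Matrix.of fun i j => ⟪φ i, φ j⟫_ℂ).updateCol (τ.symm k)
          fun i => ⟪φ i, T (φ (τ.symm k))⟫_ℂ), Finset.mul_sum]
    refine Fintype.sum_equiv (Equiv.mulLeft τ⁻¹) _ _ fun σ => ?_
    rw [Equiv.coe_mulLeft, ← mul_assoc, sign_cancel]
    congr 1
    refine Finset.prod_congr rfl fun j _ => ?_
    have hπ : (τ⁻¹ * σ) j = τ.symm (σ j) := rfl
    by_cases h : σ j = k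
    · have hl : (τ⁻¹ * σ) j = τ.symm k := by rw [hπ, h]
      simp [h, hl, Matrix.updateCol_apply]
    · have hl : (τ⁻¹ * σ) j ≠ τ.symm k := by
        rw [hπ]
        exact fun hh => h (τ.symm.injective hh)
      simp [h, hl, Matrix.updateCol_apply, hπ]
  rw [hbig, map_smul, map_sum]
  simp only [map_sum, map_smul, smul_eq_mul, inn_detState_tprod inn h_inn φ, key1]
  have key2 : ∀ τ : Equiv.Perm (Fin m),
      ∑ k, ((m.factorial : ℂ)⁻¹ * (((Equiv.Perm.sign τ : ℤ) : ℂ)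
          * ((Matrix.of fun i j => ⟪φ i, φ j⟫_ℂ).updateCol (τ.symm k)
              fun i => ⟪φ i, T (φ (τ.symm k))⟫_ℂ).det))
        = (m.factorial : ℂ)⁻¹ * (((Equiv.Perm.sign τ : ℤ) : ℂ)
            * ∑ l, ((Matrix.of fun i j => ⟪φ i, φ j⟫_ℂ).updateCol l
                fun i => ⟪φ i, T (φ l)⟫_ℂ).det) := by
    intro τ
    rw [← Finset.mul_sum, ← Finset.mul_sum]
    congr 2
    exact Equiv.sum_comp τ.symm fun l => ((Matrix.of fun i j => ⟪φ i, φ j⟫_ℂ).updateCol l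
      fun i => ⟪φ i, T (φ l)⟫_ℂ).det
  simp only [key2]
  exact final_sum _

/-- The energy of the determinant state of linearly independent vectors
`φ₁,…,φ_m` for the Hamiltonian `𝐇 = Σ_k 1⊗⋯⊗Ĥ⊗⋯⊗1` equals the trace of the Rayleigh matrix:
`⟨φ_A, 𝐇 φ_A⟩ / ⟨φ_A, φ_A⟩ = tr(G⁻¹ G^{(H)})`, where `G_{ij} = ⟨φ_i, φ_j⟩` and
`G^{(H)}_{ij} = ⟨φ_i, Ĥ φ_j⟩`. -/
theorem energy_detState_eq_trace_rayleigh
    {H : Type*} [NormedAddCommGroup H] [InnerProductSpace ℂ H] [FiniteDimensional ℂ H]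
    {m : ℕ}
    (inn : (⨂[ℂ] _ : Fin m, H) →ₗ⋆[ℂ] (⨂[ℂ] _ : Fin m, H) →ₗ[ℂ] ℂ)
    (h_inn : ∀ x y : Fin m → H,
      inn (PiTensorProduct.tprod ℂ x) (PiTensorProduct.tprod ℂ y) = ∏ i, ⟪x i, y i⟫_ℂ)
    (T : H →ₗ[ℂ] H) (hT : LinearMap.IsSymmetric T)
    (φ : Fin m → H) (hφli : LinearIndependent ℂ φ) :
    inn (detState φ) (bigOp T (detState φ)) / inn (detState φ) (detState φ)
      = Matrix.trace ((Matrix.of fun i j => ⟪φ i, φ j⟫_ℂ)⁻¹ *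
          Matrix.of fun i j => ⟪φ i, T (φ j)⟫_ℂ) := by
  rw [inn_detState_detState inn h_inn φ, inn_detState_bigOp inn h_inn T φ]
  have hG : (Matrix.of fun i j => ⟪φ i, φ j⟫_ℂ).det ≠ 0 := det_gram_ne_zero φ hφli
  have hm : (m.factorial : ℂ) ≠ 0 := Nat.cast_ne_zero.mpr (Nat.factorial_ne_zero m)
  rw [trace_formula _ _ hG]
  simp only [Matrix.of_apply]
  rw [mul_div_mul_left _ _ (inv_ne_zero hm)]
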